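/- FDR-controlling procedures are exactly the maximal e-closed procedures: if R is the output of any FDR-controlling procedure and E_A = FDP_A(R)/α, then R ∈ C̄, and the only elements of C̄ are R and ∅ (when R ≠ ∅); in particular for every R' ⊆ [K] with R' ≠ R and R' ≠ ∅, there exists A ⊆ [K] with FDP_A(R')/α > E_A. -/
import Mathlib


open Finset

/-- The false discovery proportion `FDP_A(S) = |A ∩ S| / max(|S|, 1)`. -/
noncomputable def FDP {K : ℕ} (A S : Finset (Fin K)) : ℝ :=
  ((A ∩ S).card : ℝ) / max (S.card : ℝ) 1

/-- with `E_A := FDP_A(R)/α` for a fixed nonempty `R`, the closed candidate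
set `C̄ = {S : ∀ A, E_A ≥ FDP_A(S)/α}` consists exactly of `R` and `∅`: a set `S` satisfies
`FDP_A(R)/α ≥ FDP_A(S)/α` for all `A` iff `S = R` or `S = ∅`. -/
theorem stmt11 (K : ℕ) (hK : 0 < K) (α : ℝ) (hα : 0 < α) (hα1 : α < 1)
    (R : Finset (Fin K)) (hR : R.Nonempty) :
    ∀ S : Finset (Fin K),
      (∀ A : Finset (Fin K), FDP A R / α ≥ FDP A S / α) ↔ (S = R ∨ S = ∅) := by
  intro S
  have hRcard : (0:ℝ) < R.card := by exact_mod_cast card_pos.mpr hR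
  have hmaxR : max ((R.card:ℝ)) 1 = R.card := max_eq_left (by exact_mod_cast card_pos.mpr hR)
  constructor
  · intro h
    by_cases hS : S = ∅
    · right; exact hS
    left
    have hSne : S.Nonempty := nonempty_iff_ne_empty.mpr hS
    have hScard : (0:ℝ) < S.card := by exact_mod_cast card_pos.mpr hSne
    have hmaxS : max ((S.card:ℝ)) 1 = S.card :=
      max_eq_left (by exact_mod_cast card_pos.mpr hSne)
    have key : ∀ A : Finset (Fin K), FDP A S ≤ FDP A R := by
      intro A
      exact (div_le_div_iff_of_pos_right hα).mp (h A)
    -- A = S : get R ⊆ S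
    have h1 := key S
    have hSS : FDP S S = 1 := by
      unfold FDP
      rw [inter_self, hmaxS]
      field_simp
    have hsub : R ⊆ S := by
      have h2 : (R.card : ℝ) ≤ ((S ∩ R).card : ℝ) := by
        rw [hSS] at h1
        unfold FDP at h1
        rw [hmaxR] at h1
        have := (one_le_div hRcard).mp h1
        exact this
      have hcard : R.card ≤ (S ∩ R).card := by exact_mod_cast h2
      have heq : S ∩ R = R := eq_of_subset_of_card_le inter_subset_right hcard
      intro x hx
      exact (mem_inter.mp (heq.ge hx)).1
    -- A = S \ R : get S ⊆ R
    have h3 := key (S \ R)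
    have hzero : FDP (S \ R) R = 0 := by
      unfold FDP
      rw [sdiff_inter_self, card_empty]
      simp
    rw [hzero] at h3
    have h4 : FDP (S \ R) S = ((S \ R).card : ℝ) / S.card := by
      unfold FDP
      rw [hmaxS, inter_eq_left.mpr sdiff_subset]
    rw [h4] at h3
    have h5 : ((S \ R).card : ℝ) ≤ 0 := by
      by_contra hc
      push_neg at hc
      have := div_pos hc hScard
      linarith
    have h6 : (S \ R).card = 0 := by exact_mod_cast le_antisymm h5 (by positivity)
    have hsub2 : S ⊆ R := sdiff_eq_empty_iff_subset.mp (card_eq_zero.mp h6)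
    exact Subset.antisymm hsub2 hsub
  · rintro (rfl | rfl)
    · intro A; exact le_refl _
    · intro A
      have h0 : FDP A ∅ = 0 := by
        unfold FDP; rw [inter_empty, card_empty]; simp
      rw [h0, zero_div]
      unfold FDP
      positivity
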